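/- arXiv:1601.06421 — 7 statements merged into one kernel-verified Lean document; each statement's English description precedes it below -/
import Mathlib

section
/- Let S : ℝ → ℝ be measurable, nonnegative and Lebesgue-integrable, let θ > 0, let F_θ := {f ∈ ℝ : S(f) > θ}, and assume the level set {f ∈ ℝ : S(f) = θ} has Lebesgue measure zero. If F ⊆ ℝ is measurable with μ(F) ≤ μ(F_θ) and ∫_F S(f) df = ∫_{F_θ} S(f) df, then μ(F \ F_θ) = 0 and μ(F_θ \ F) = 0; i.e., any energy-maximizing set of measure at most μ(F_θ) coincides with F_θ up to a Lebesgue-null set. -/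
/-!
Exchange argument. Write `T = {θ < S}`. On `F \ T` we have `S ≤ θ`, on `T \ F` we have `S > θ`,
and `μ (F \ T) ≤ μ (T \ F)` because `μ F ≤ μ T`. Hence
`∫_{F \ T} S ≤ θ μ (F \ T) ≤ θ μ (T \ F) ≤ ∫_{T \ F} S`, and the last inequality is strict unless
`T \ F` is null. Equal energies force `∫_{F \ T} S = ∫_{T \ F} S`, so `T \ F` is null, and then so
is `F \ T`.
-/

open MeasureTheory

namespace MeasureTheory

variable {X : Type*} [MeasurableSpace X] {μ : Measure X} {f : X → ℝ} {s t : Set X} {c : ℝ}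

theorem measure_sdiff_le_measure_sdiff_of_le (hs : MeasurableSet s) (ht : MeasurableSet t)
    (hst : μ s ≤ μ t) (hfin : μ (s ∩ t) ≠ ⊤) : μ (s \ t) ≤ μ (t \ s) := by
  rw [← measure_inter_add_sdiff s ht, ← measure_inter_add_sdiff t hs, Set.inter_comm t] at hst
  exact (ENNReal.add_le_add_iff_left hfin).1 hst

theorem setIntegral_sdiff_eq_of_setIntegral_eq (hs : MeasurableSet s) (ht : MeasurableSet t)
    (hfs : IntegrableOn f s μ) (hft : IntegrableOn f t μ)
    (h : ∫ x in s, f x ∂μ = ∫ x in t, f x ∂μ) :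
    ∫ x in s \ t, f x ∂μ = ∫ x in t \ s, f x ∂μ := by
  rw [← integral_inter_add_sdiff ht hfs, ← integral_inter_add_sdiff hs hft, Set.inter_comm t] at h
  exact add_left_cancel h

theorem setIntegral_le_of_le_const_real (hs : MeasurableSet s) (hμs : μ s ≠ ⊤)
    (hf : ∀ x ∈ s, f x ≤ c) (hfint : IntegrableOn f s μ) :
    ∫ x in s, f x ∂μ ≤ c * μ.real s := by
  simpa [mul_comm] using setIntegral_mono_on hfint (integrableOn_const hμs) hs hf

theorem mul_measureReal_lt_setIntegral_of_const_lt (hs : MeasurableSet s) (hμs : μ s ≠ ⊤)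
    (hμs₀ : μ s ≠ 0) (hf : ∀ x ∈ s, c < f x) (hfint : IntegrableOn f s μ) :
    c * μ.real s < ∫ x in s, f x ∂μ := by
  have hsub : IntegrableOn (fun x ↦ f x - c) s μ := hfint.sub (integrableOn_const hμs)
  have hsupp : s ⊆ Function.support (fun x ↦ f x - c) := fun x hx ↦ (sub_pos.2 (hf x hx)).ne'
  have hpos : 0 < ∫ x in s, (f x - c) ∂μ := by
    rw [setIntegral_pos_iff_support_of_nonneg_ae _ hsub]
    · rwa [Set.inter_eq_self_of_subset_right hsupp, pos_iff_ne_zero]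
    · exact (ae_restrict_iff' hs).2 (ae_of_all _ fun x hx ↦ (sub_pos.2 (hf x hx)).le)
  rw [integral_sub hfint (integrableOn_const hμs), setIntegral_const, smul_eq_mul] at hpos
  linarith

/-- Bathtub principle, uniqueness part. -/
theorem measure_sdiff_superlevelSet_eq_zero_of_setIntegral_eq (hf : Measurable f)
    (hfint : Integrable f μ) (hc : 0 ≤ c) (hfin : μ {x | c < f x} ≠ ⊤) (hs : MeasurableSet s)
    (hle : μ s ≤ μ {x | c < f x})
    (heq : ∫ x in s, f x ∂μ = ∫ x in {x | c < f x}, f x ∂μ) :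
    μ (s \ {x | c < f x}) = 0 ∧ μ ({x | c < f x} \ s) = 0 := by
  set T := {x | c < f x}
  have hT : MeasurableSet T := measurableSet_lt measurable_const hf
  have hTs_fin : μ (T \ s) ≠ ⊤ := measure_ne_top_of_subset Set.sdiff_subset hfin
  have hsT_fin : μ (s \ T) ≠ ⊤ :=
    measure_ne_top_of_subset Set.sdiff_subset (hle.trans_lt hfin.lt_top).ne
  have hμ : μ (s \ T) ≤ μ (T \ s) := measure_sdiff_le_measure_sdiff_of_le hs hT hle
    (measure_ne_top_of_subset Set.inter_subset_right hfin)
  have hint : ∫ x in s \ T, f x ∂μ = ∫ x in T \ s, f x ∂μ :=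
    setIntegral_sdiff_eq_of_setIntegral_eq hs hT hfint.integrableOn hfint.integrableOn heq
  have hTs : μ (T \ s) = 0 := by
    by_contra hne
    have := calc
      ∫ x in s \ T, f x ∂μ ≤ c * μ.real (s \ T) := setIntegral_le_of_le_const_real (hs.diff hT)
          hsT_fin (fun x hx ↦ not_lt.1 hx.2) hfint.integrableOn
      _ ≤ c * μ.real (T \ s) := mul_le_mul_of_nonneg_left (ENNReal.toReal_mono hTs_fin hμ) hc
      _ < ∫ x in T \ s, f x ∂μ := mul_measureReal_lt_setIntegral_of_const_lt (hT.diff hs)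
          hTs_fin hne (fun x hx ↦ hx.1) hfint.integrableOn
    exact this.ne hint
  exact ⟨nonpos_iff_eq_zero.1 (hTs ▸ hμ), hTs⟩

end MeasureTheory

theorem waterfilling_set_unique_maximizer_general
    (S : ℝ → ℝ) (hSmeas : Measurable S)
    (hSint : Integrable S) (θ : ℝ) (hθ : 0 < θ)
    (F : Set ℝ) (hFmeas : MeasurableSet F)
    (hle : volume F ≤ volume {f : ℝ | θ < S f})
    (heq : ∫ f in F, S f = ∫ f in {f : ℝ | θ < S f}, S f) :
    volume (F \ {f : ℝ | θ < S f}) = 0 ∧ volume ({f : ℝ | θ < S f} \ F) = 0 :=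
  measure_sdiff_superlevelSet_eq_zero_of_setIntegral_eq hSmeas hSint hθ.le
    (hSint.measure_gt_lt_top hθ).ne hFmeas hle heq

/-- If the level set `{S = θ}` is null, then any energy-maximizing set of
measure at most `μ F_θ` coincides with `F_θ = {S > θ}` up to a Lebesgue-null set. -/
theorem waterfilling_set_unique_maximizer
    (S : ℝ → ℝ) (hSmeas : Measurable S) (hSnonneg : ∀ f, 0 ≤ S f)
    (hSint : Integrable S) (θ : ℝ) (hθ : 0 < θ)
    (hlevel : volume {f : ℝ | S f = θ} = 0)
    (F : Set ℝ) (hFmeas : MeasurableSet F)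
    (hle : volume F ≤ volume {f : ℝ | θ < S f})
    (heq : ∫ f in F, S f = ∫ f in {f : ℝ | θ < S f}, S f) :
    volume (F \ {f : ℝ | θ < S f}) = 0 ∧ volume ({f : ℝ | θ < S f} \ F) = 0 :=
  waterfilling_set_unique_maximizer_general S hSmeas hSint θ hθ F hFmeas hle heq
end

section
/- Let S : ℝ → ℝ be measurable, nonnegative and Lebesgue-integrable, let θ > 0, F_θ := {f ∈ ℝ : S(f) > θ}, and let f_s ≥ μ(F_θ). If F ⊆ ℝ is measurable with μ(F) ≤ f_s and F maximizes energy under the budget f_s, i.e. ∫_F S(f) df ≥ ∫_G S(f) df for every measurable G ⊆ ℝ with μ(G) ≤ f_s, then μ(F_θ \ F) = 0; i.e., any energy-maximizing set with measure budget at least μ(F_θ) contains F_θ up to a Lebesgue-null set. -/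
/-!
If `F` missed a non-null part `A` of `F_θ = {S > θ}`, trade `A` for a part `B` of `F \ F_θ`
of the same measure (or for all of `F \ F_θ` when that is smaller, in which case the new set
lies inside `F_θ`). The measure budget is respected, and since `S > θ` on `A` while `S ≤ θ`
on `B` the energy strictly increases, contradicting maximality. The set `B` exists because a
set `s` of finite Lebesgue measure has subsets of every smaller measure: cut `s` at a level `t`
where the `1`-Lipschitz function `t ↦ μ(s ∩ (-∞, t])` takes the prescribed value.
-/

open MeasureTheory Set Filter Topology
open scoped ENNReal

lemma lipschitzWith_volume_real_inter_Iic {s : Set ℝ} (hs : volume s ≠ ∞) :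
    LipschitzWith 1 fun t => volume.real (s ∩ Iic t) := by
  refine LipschitzWith.of_le_add_mul 1 fun x y => ?_
  have hsub : s ∩ Iic x ⊆ (s ∩ Iic y) ∪ Ioc y x := fun z ⟨hzs, hzx⟩ =>
    (le_or_gt z y).imp (fun h => ⟨hzs, h⟩) (fun h => ⟨h, hzx⟩)
  have hfin : volume ((s ∩ Iic y) ∪ Ioc y x) ≠ ∞ :=
    measure_union_ne_top (ne_top_of_le_ne_top hs (measure_mono inter_subset_left))
      measure_Ioc_lt_top.ne
  calc volume.real (s ∩ Iic x) ≤ volume.real ((s ∩ Iic y) ∪ Ioc y x) := measureReal_mono hsub hfin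
    _ ≤ volume.real (s ∩ Iic y) + volume.real (Ioc y x) := measureReal_union_le _ _
    _ ≤ volume.real (s ∩ Iic y) + 1 * dist x y := by
      rw [Real.volume_real_Ioc, Real.dist_eq, one_mul]
      gcongr
      exact max_le (le_abs_self _) (abs_nonneg _)

theorem exists_subset_volume_eq {s : Set ℝ} (hs : MeasurableSet s) (hfin : volume s ≠ ∞)
    {r : ℝ≥0∞} (hr : r ≤ volume s) : ∃ t ⊆ s, MeasurableSet t ∧ volume t = r := by
  rcases eq_zero_or_pos r with rfl | hr0
  · exact ⟨∅, empty_subset _, MeasurableSet.empty, measure_empty⟩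
  rcases hr.eq_or_lt with rfl | hrs
  · exact ⟨s, subset_rfl, hs, rfl⟩
  have hcont : Continuous fun t => volume (s ∩ Iic t) :=
    (ENNReal.continuous_ofReal.comp (lipschitzWith_volume_real_inter_Iic hfin).continuous).congr
      fun t => ofReal_measureReal (ne_top_of_le_ne_top hfin (measure_mono inter_subset_left))
  have hbot : Tendsto (fun t => volume (s ∩ Iic t)) atBot (𝓝 0) := by
    have h := tendsto_measure_iInter_atBot (μ := volume)
      (fun t => (hs.inter measurableSet_Iic).nullMeasurableSet)
      (fun _ _ hxy => inter_subset_inter_right s (Iic_subset_Iic.2 hxy))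
      ⟨0, ne_top_of_le_ne_top hfin (measure_mono inter_subset_left)⟩
    rwa [← inter_iInter, iInter_Iic_eq_empty_iff.2 (by simp [not_bddBelow_univ]), inter_empty,
      measure_empty] at h
  have htop : Tendsto (fun t => volume (s ∩ Iic t)) atTop (𝓝 (volume s)) := by
    have h := tendsto_measure_iUnion_atTop (μ := volume)
      (fun _ _ hxy => inter_subset_inter_right s (Iic_subset_Iic.2 hxy))
    rwa [← inter_iUnion, iUnion_Iic, inter_univ] at h
  obtain ⟨a, ha⟩ := (hbot.eventually (eventually_lt_nhds hr0)).exists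
  obtain ⟨b, hb⟩ := (htop.eventually (eventually_gt_nhds hrs)).exists
  obtain ⟨c, hc⟩ := mem_range_of_exists_le_of_exists_ge hcont ⟨a, ha.le⟩ ⟨b, hb.le⟩
  exact ⟨s ∩ Iic c, inter_subset_left, hs.inter measurableSet_Iic, hc⟩

section ExchangeArgument

variable {α : Type*} [MeasurableSpace α] {μ : Measure α}

theorem measure_diff_union_eq_of_measure_eq {F A B : Set α} (hB : MeasurableSet B)
    (hA : MeasurableSet A) (hBF : B ⊆ F) (hFA : Disjoint F A) (hBA : μ B = μ A) :
    μ ((F \ B) ∪ A) = μ F := by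
  have h := measure_sdiff_add_inter (μ := μ) F hB
  rwa [inter_eq_right.2 hBF, hBA, ← measure_union (hFA.mono_left sdiff_subset) hA] at h

theorem mul_measureReal_lt_setIntegral {f : α → ℝ} {c : ℝ} {s : Set α} (hs : MeasurableSet s)
    (hfs : IntegrableOn f s μ) (hs0 : μ s ≠ 0) (hsfin : μ s ≠ ∞) (hlt : ∀ x ∈ s, c < f x) :
    c * μ.real s < ∫ x in s, f x ∂μ := by
  have hc : IntegrableOn (fun _ => c) s μ := integrableOn_const hsfin
  have hpos : 0 < ∫ x in s, (f x - c) ∂μ := by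
    rw [setIntegral_pos_iff_support_of_nonneg_ae
      (ae_restrict_of_forall_mem hs fun x hx => (sub_pos.2 (hlt x hx)).le) (hfs.sub hc)]
    rw [inter_eq_right.2 fun x hx => Function.mem_support.2 (sub_pos.2 (hlt x hx)).ne']
    exact pos_iff_ne_zero.2 hs0
  rw [integral_sub hfs hc, setIntegral_const, smul_eq_mul, mul_comm] at hpos
  linarith

theorem setIntegral_lt_setIntegral_diff_union {f : α → ℝ} {c : ℝ} {F A B : Set α}
    (hf : Integrable f μ) (hc : 0 ≤ c) (hA : MeasurableSet A) (hB : MeasurableSet B)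
    (hBF : B ⊆ F) (hFA : Disjoint F A) (hAf : ∀ x ∈ A, c < f x) (hBf : ∀ x ∈ B, f x ≤ c)
    (hA0 : μ A ≠ 0) (hAfin : μ A ≠ ∞) (hBA : μ B ≤ μ A) :
    ∫ x in F, f x ∂μ < ∫ x in (F \ B) ∪ A, f x ∂μ := by
  have hF_split : ∫ x in F, f x ∂μ = ∫ x in F \ B, f x ∂μ + ∫ x in B, f x ∂μ := by
    rw [← setIntegral_union disjoint_sdiff_left hB hf.integrableOn hf.integrableOn,
      sdiff_union_of_subset hBF]
  have hB_le : ∫ x in B, f x ∂μ ≤ c * μ.real B := by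
    calc ∫ x in B, f x ∂μ ≤ ∫ _ in B, c ∂μ :=
          setIntegral_mono_on hf.integrableOn
            (integrableOn_const (ne_top_of_le_ne_top hAfin hBA)) hB hBf
      _ = c * μ.real B := by rw [setIntegral_const, smul_eq_mul, mul_comm]
  have hA_gt := mul_measureReal_lt_setIntegral hA hf.integrableOn hA0 hAfin hAf
  have hBA_real : c * μ.real B ≤ c * μ.real A :=
    mul_le_mul_of_nonneg_left (ENNReal.toReal_mono hAfin hBA) hc
  rw [hF_split, setIntegral_union (hFA.mono_left sdiff_subset) hA hf.integrableOn hf.integrableOn]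
  linarith

end ExchangeArgument

theorem energy_maximizer_contains_waterfilling_set_general
    (S : ℝ → ℝ) (hSmeas : Measurable S)
    (hSint : Integrable S) (θ : ℝ) (hθ : 0 < θ)
    (fs : ℝ) (hfs : volume {f : ℝ | θ < S f} ≤ ENNReal.ofReal fs)
    (F : Set ℝ) (hFmeas : MeasurableSet F)
    (hFle : volume F ≤ ENNReal.ofReal fs)
    (hmax : ∀ G : Set ℝ, MeasurableSet G → volume G ≤ ENNReal.ofReal fs →
      ∫ f in G, S f ≤ ∫ f in F, S f) :
    volume ({f : ℝ | θ < S f} \ F) = 0 := by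
  set T := {f : ℝ | θ < S f}
  have hT : MeasurableSet T := measurableSet_lt measurable_const hSmeas
  have hA : MeasurableSet (T \ F) := hT.diff hFmeas
  by_contra hA0
  have hAfin : volume (T \ F) ≠ ∞ :=
    ne_top_of_le_ne_top ENNReal.ofReal_ne_top ((measure_mono sdiff_subset).trans hfs)
  have no_exchange : ∀ B ⊆ F \ T, MeasurableSet B → volume B ≤ volume (T \ F) →
      volume ((F \ B) ∪ (T \ F)) ≤ ENNReal.ofReal fs → False :=
    fun B hBsub hB hBA hG => (hmax _ ((hFmeas.diff hB).union hA) hG).not_gt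
      (setIntegral_lt_setIntegral_diff_union hSint hθ.le hA hB (hBsub.trans sdiff_subset)
        disjoint_sdiff_right (fun _ hx => hx.1) (fun _ hx => not_lt.1 (hBsub hx).2) hA0 hAfin hBA)
  rcases le_or_gt (volume (T \ F)) (volume (F \ T)) with hle | hlt
  · obtain ⟨B, hBsub, hB, hBvol⟩ := exists_subset_volume_eq (hFmeas.diff hT)
      (ne_top_of_le_ne_top ENNReal.ofReal_ne_top ((measure_mono sdiff_subset).trans hFle)) hle
    exact no_exchange B hBsub hB hBvol.le
      ((measure_diff_union_eq_of_measure_eq hB hA (hBsub.trans sdiff_subset)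
        disjoint_sdiff_right hBvol).trans_le hFle)
  · refine no_exchange (F \ T) subset_rfl (hFmeas.diff hT) hlt.le
      ((measure_mono (union_subset ?_ sdiff_subset)).trans hfs)
    rw [sdiff_sdiff_right_self]
    exact inter_subset_right

/-- Any energy-maximizing set with measure budget `f_s ≥ μ F_θ` contains
`F_θ = {S > θ}` up to a Lebesgue-null set. -/
theorem energy_maximizer_contains_waterfilling_set
    (S : ℝ → ℝ) (hSmeas : Measurable S) (hSnonneg : ∀ f, 0 ≤ S f)
    (hSint : Integrable S) (θ : ℝ) (hθ : 0 < θ)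
    (fs : ℝ) (hfs : volume {f : ℝ | θ < S f} ≤ ENNReal.ofReal fs)
    (F : Set ℝ) (hFmeas : MeasurableSet F)
    (hFle : volume F ≤ ENNReal.ofReal fs)
    (hmax : ∀ G : Set ℝ, MeasurableSet G → volume G ≤ ENNReal.ofReal fs →
      ∫ f in G, S f ≤ ∫ f in F, S f) :
    volume ({f : ℝ | θ < S f} \ F) = 0 :=
  energy_maximizer_contains_waterfilling_set_general S hSmeas hSint θ hθ fs hfs F hFmeas hFle hmax
end

section
/- (Waterfilling comparison lemma used to prove the optimality of filter-bank sampling.) Let S, S' : ℝ → ℝ be measurable, nonnegative, Lebesgue-integrable functions with S'(f) ≤ S(f) for almost every f. Let θ, θ' > 0 be such that the rate integrals match and are finite: ∫_ℝ log₂⁺(S(f)/θ) df = ∫_ℝ log₂⁺(S'(f)/θ') df < ∞. Then ∫_ℝ max(S'(f) − θ', 0) df ≤ ∫_ℝ max(S(f) − θ, 0) df; i.e., at equal coding rate the preserved-spectrum term for the pointwise-smaller spectral density is no larger, so the corresponding distortion σ² − ∫ [S' − θ']⁺ with fixed source variance σ² is no smaller. -/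
open MeasureTheory

/-- Lower bound for the logarithm: `1 - 1/x ≤ log x` for `x > 0`. -/
private lemma log_lb {x : ℝ} (hx : 0 < x) : 1 - 1/x ≤ Real.log x := by
  have h := Real.log_le_sub_one_of_pos (x := 1/x) (by positivity)
  rw [one_div, Real.log_inv] at h
  rw [one_div]
  linarith

/-- The water-filling "excess" function `x ↦ [x-θ]⁺ - θ·ln⁺(x/θ)` is monotone on `[0,∞)`. -/
private lemma Hmono {θ a b : ℝ} (hθ : 0 < θ) (ha : 0 ≤ a) (hab : a ≤ b) :
    max (a - θ) 0 - θ * max (Real.log (a/θ)) 0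
      ≤ max (b - θ) 0 - θ * max (Real.log (b/θ)) 0 := by
  rcases le_or_gt b θ with hbθ | hbθ
  · -- both sides are zero
    have h1 : max (a - θ) 0 = 0 := max_eq_right (by linarith)
    have h2 : max (b - θ) 0 = 0 := max_eq_right (by linarith)
    have h3 : max (Real.log (a/θ)) 0 = 0 :=
      max_eq_right (Real.log_nonpos (div_nonneg (by linarith) (by linarith)) (by rw [div_le_one hθ]; linarith))
    have h4 : max (Real.log (b/θ)) 0 = 0 :=
      max_eq_right (Real.log_nonpos (div_nonneg (by linarith) (by linarith)) (by rw [div_le_one hθ]; linarith))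
    rw [h1, h2, h3, h4]
  · have hb0 : 0 < b := lt_trans hθ hbθ
    have h2 : max (b - θ) 0 = b - θ := max_eq_left (by linarith)
    have h4 : max (Real.log (b/θ)) 0 = Real.log (b/θ) :=
      max_eq_left (Real.log_nonneg (by rw [le_div_iff₀ hθ]; linarith))
    rcases le_or_gt a θ with haθ | haθ
    · -- left side is zero, right side is nonneg
      have h1 : max (a - θ) 0 = 0 := max_eq_right (by linarith)
      have h3 : max (Real.log (a/θ)) 0 = 0 :=
        max_eq_right (Real.log_nonpos (div_nonneg (by linarith) (by linarith)) (by rw [div_le_one hθ]; linarith))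
      rw [h1, h2, h3, h4]
      have hlog : Real.log (b/θ) ≤ b/θ - 1 := Real.log_le_sub_one_of_pos (by positivity)
      have : θ * Real.log (b/θ) ≤ θ * (b/θ - 1) := by nlinarith
      have hθb : θ * (b/θ) = b := by field_simp
      nlinarith
    · have ha0 : 0 < a := lt_trans hθ haθ
      have h1 : max (a - θ) 0 = a - θ := max_eq_left (by linarith)
      have h3 : max (Real.log (a/θ)) 0 = Real.log (a/θ) :=
        max_eq_left (Real.log_nonneg (by rw [le_div_iff₀ hθ]; linarith))
      rw [h1, h2, h3, h4]
      have hdiv : Real.log (b/θ) - Real.log (a/θ) = Real.log (b/a) := by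
        rw [Real.log_div (by positivity) (by positivity),
            Real.log_div (by positivity) (by positivity),
            Real.log_div (by positivity) (by positivity)]
        ring
      have hlog : Real.log (b/a) ≤ b/a - 1 := Real.log_le_sub_one_of_pos (by positivity)
      have hlog0 : 0 ≤ Real.log (b/a) :=
        Real.log_nonneg ((le_div_iff₀ ha0).mpr (by linarith))
      have key : θ * Real.log (b/a) ≤ a * (b/a - 1) := by nlinarith
      have hab' : a * (b/a) = b := by field_simp
      nlinarith [hdiv]

/-- Pointwise comparison: for `0 < θ' ≤ θ` and `0 ≤ x`,
`[x-θ']⁺ - θ·ln⁺(x/θ') ≤ [x-θ]⁺ - θ·ln⁺(x/θ)`. -/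
private lemma Gle {θ θ' x : ℝ} (hθ' : 0 < θ') (hθθ : θ' ≤ θ) (hx : 0 ≤ x) :
    max (x - θ') 0 - θ * max (Real.log (x/θ')) 0
      ≤ max (x - θ) 0 - θ * max (Real.log (x/θ)) 0 := by
  have hθ : 0 < θ := lt_of_lt_of_le hθ' hθθ
  rcases le_or_gt x θ' with hxθ' | hxθ'
  · -- both sides zero
    have h1 : max (x - θ') 0 = 0 := max_eq_right (by linarith)
    have h2 : max (x - θ) 0 = 0 := max_eq_right (by linarith)
    have h3 : max (Real.log (x/θ')) 0 = 0 :=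
      max_eq_right (Real.log_nonpos (div_nonneg (by linarith) (by linarith)) (by rw [div_le_one hθ']; linarith))
    have h4 : max (Real.log (x/θ)) 0 = 0 :=
      max_eq_right (Real.log_nonpos (div_nonneg (by linarith) (by linarith)) (by rw [div_le_one hθ]; linarith))
    rw [h1, h2, h3, h4]
  · have hx0 : 0 < x := lt_trans hθ' hxθ'
    have h1 : max (x - θ') 0 = x - θ' := max_eq_left (by linarith)
    have h3 : max (Real.log (x/θ')) 0 = Real.log (x/θ') :=
      max_eq_left (Real.log_nonneg (by rw [le_div_iff₀ hθ']; linarith))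
    rcases le_or_gt x θ with hxθ | hxθ
    · -- middle region: need x - θ' ≤ θ log(x/θ')
      have h2 : max (x - θ) 0 = 0 := max_eq_right (by linarith)
      have h4 : max (Real.log (x/θ)) 0 = 0 :=
        max_eq_right (Real.log_nonpos (div_nonneg (by linarith) (by linarith)) (by rw [div_le_one hθ]; linarith))
      rw [h1, h2, h3, h4]
      have hlb : 1 - 1/(x/θ') ≤ Real.log (x/θ') := log_lb (by positivity)
      have hrw : 1 - 1/(x/θ') = (x - θ')/x := by field_simp
      rw [hrw] at hlb
      have h5 : θ * ((x - θ')/x) ≤ θ * Real.log (x/θ') := by nlinarith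
      have h6 : x - θ' ≤ θ * ((x - θ')/x) := by
        rw [mul_div_assoc']
        rw [le_div_iff₀ hx0]
        nlinarith
      linarith
    · -- upper region
      have h2 : max (x - θ) 0 = x - θ := max_eq_left (by linarith)
      have h4 : max (Real.log (x/θ)) 0 = Real.log (x/θ) :=
        max_eq_left (Real.log_nonneg (by rw [le_div_iff₀ hθ]; linarith))
      rw [h1, h2, h3, h4]
      have hdiv : Real.log (x/θ') - Real.log (x/θ) = Real.log (θ/θ') := by
        rw [Real.log_div (by positivity) (by positivity),
            Real.log_div (by positivity) (by positivity),
            Real.log_div (by positivity) (by positivity)]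
        ring
      have hlb : 1 - 1/(θ/θ') ≤ Real.log (θ/θ') := log_lb (by positivity)
      have hrw : 1 - 1/(θ/θ') = (θ - θ')/θ := by field_simp
      rw [hrw] at hlb
      have h5 : θ * ((θ - θ')/θ) = θ - θ' := by field_simp
      nlinarith [hdiv]

/-- `ln⁺` as a positive multiple of `log₂⁺`. -/
private lemma logplus_eq (y : ℝ) :
    max (Real.log y) 0 = Real.log 2 * max (Real.logb 2 y) 0 := by
  have h2 : (0:ℝ) < Real.log 2 := Real.log_pos (by norm_num)
  rw [mul_max_of_nonneg _ _ h2.le, mul_zero, Real.logb,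
      mul_div_cancel₀ _ (ne_of_gt h2)]

/-- Waterfilling comparison lemma. If `S' ≤ S` a.e. and the (finite)
rate integrals match, then the preserved-spectrum term for `S'` is no larger. -/
theorem waterfilling_comparison
    (S S' : ℝ → ℝ) (hSmeas : Measurable S) (hS'meas : Measurable S')
    (hSnonneg : ∀ f, 0 ≤ S f) (hS'nonneg : ∀ f, 0 ≤ S' f)
    (hSint : Integrable S) (hS'int : Integrable S')
    (hle : ∀ᵐ f ∂(volume : Measure ℝ), S' f ≤ S f)
    (θ θ' : ℝ) (hθ : 0 < θ) (hθ' : 0 < θ')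
    (hrateInt : Integrable (fun f => max (Real.logb 2 (S f / θ)) 0))
    (hrateInt' : Integrable (fun f => max (Real.logb 2 (S' f / θ')) 0))
    (hrateEq : ∫ f, max (Real.logb 2 (S f / θ)) 0
      = ∫ f, max (Real.logb 2 (S' f / θ')) 0) :
    ∫ f, max (S' f - θ') 0 ≤ ∫ f, max (S f - θ) 0 := by
  -- integrability of the clipped functions
  have hclip : ∀ (T : ℝ → ℝ) (τ : ℝ), Measurable T → (∀ f, 0 ≤ T f) → 0 < τ →
      Integrable T → Integrable (fun f => max (T f - τ) 0) := by
    intro T τ hTm hTnn hτ hTi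
    refine hTi.mono ((hTm.sub measurable_const).max measurable_const).aestronglyMeasurable
      (Filter.Eventually.of_forall fun f => ?_)
    have h1 : (0:ℝ) ≤ max (T f - τ) 0 := le_max_right _ _
    have h2 : max (T f - τ) 0 ≤ T f := max_le (by linarith) (hTnn f)
    rw [Real.norm_eq_abs, Real.norm_eq_abs, abs_of_nonneg h1, abs_of_nonneg (hTnn f)]
    exact h2
  have hI1 : Integrable (fun f => max (S f - θ) 0) := hclip S θ hSmeas hSnonneg hθ hSint
  have hI1' : Integrable (fun f => max (S' f - θ') 0) := hclip S' θ' hS'meas hS'nonneg hθ' hS'int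
  rcases le_or_gt θ θ' with hθθ | hθθ
  · -- easy case: S' f - θ' ≤ S f - θ pointwise a.e.
    refine integral_mono_ae hI1' hI1 ?_
    filter_upwards [hle] with f hf
    exact max_le_max (by linarith) le_rfl
  · -- hard case: θ' < θ
    set c : ℝ := θ * Real.log 2 with hc
    -- rewrite the natural-log penalty via logb
    have hpen : ∀ (T : ℝ → ℝ) (τ : ℝ),
        (fun f => θ * max (Real.log (T f / τ)) 0)
          = fun f => c * max (Real.logb 2 (T f / τ)) 0 := by
      intro T τ
      funext f
      rw [logplus_eq, hc]
      ring
    -- combined integrands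
    have hI2 : Integrable (fun f => c * max (Real.logb 2 (S f / θ)) 0) :=
      hrateInt.const_mul c
    have hI2' : Integrable (fun f => c * max (Real.logb 2 (S' f / θ')) 0) :=
      hrateInt'.const_mul c
    have hcomb : ∫ f, (max (S' f - θ') 0 - c * max (Real.logb 2 (S' f / θ')) 0)
        ≤ ∫ f, (max (S f - θ) 0 - c * max (Real.logb 2 (S f / θ)) 0) := by
      refine integral_mono_ae (hI1'.sub hI2') (hI1.sub hI2) ?_
      filter_upwards [hle] with f hf
      have step1 : max (S' f - θ') 0 - θ * max (Real.log (S' f / θ')) 0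
          ≤ max (S' f - θ) 0 - θ * max (Real.log (S' f / θ)) 0 :=
        Gle hθ' hθθ.le (hS'nonneg f)
      have step2 : max (S' f - θ) 0 - θ * max (Real.log (S' f / θ)) 0
          ≤ max (S f - θ) 0 - θ * max (Real.log (S f / θ)) 0 :=
        Hmono hθ (hS'nonneg f) hf
      have := le_trans step1 step2
      calc max (S' f - θ') 0 - c * max (Real.logb 2 (S' f / θ')) 0
          = max (S' f - θ') 0 - θ * max (Real.log (S' f / θ')) 0 := by
            rw [congrFun (hpen S' θ') f]
        _ ≤ max (S f - θ) 0 - θ * max (Real.log (S f / θ)) 0 := this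
        _ = max (S f - θ) 0 - c * max (Real.logb 2 (S f / θ)) 0 := by
            rw [congrFun (hpen S θ) f]
    rw [integral_sub hI1' hI2', integral_sub hI1 hI2,
        integral_const_mul, integral_const_mul, hrateEq] at hcomb
    linarith
end

section
/- (Distortion of the triangular PSD and the relation f_DR = 2 f_B √(1 − D).) Fix f_B > 0 and let S_Λ(f) := (1/f_B)·max(0, 1 − |f|/f_B). For every θ with 0 ≤ θ ≤ 1/f_B, the waterfilling distortion satisfies ∫_ℝ min(S_Λ(f), θ) df = 1 − (1 − f_B θ)². Consequently, writing D := ∫_ℝ min(S_Λ, θ) and f_DR := μ({f : S_Λ(f) > θ}) = 2 f_B (1 − f_B θ), one has f_DR = 2 f_B √(1 − D). -/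
open MeasureTheory intervalIntegral

lemma tri_integrable (b c : ℝ) (hb : 0 < b) :
    Integrable (fun f : ℝ => max 0 (c - |f| / b)) := by
  have hcont : Continuous (fun f : ℝ => max 0 (c - |f| / b)) := by
    fun_prop
  refine hcont.integrable_of_hasCompactSupport ?_
  refine HasCompactSupport.intro (isCompact_Icc (a := -(c*b)) (b := c*b)) ?_
  intro x hx
  simp only [Set.mem_Icc, not_and_or, not_le] at hx
  have hxb : c * b < |x| := by
    rcases hx with h | h
    · calc c * b < -x := by linarith
        _ ≤ |x| := neg_le_abs x
    · exact h.trans_le (le_abs_self x)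
  have : c - |x| / b ≤ 0 := by
    rw [sub_nonpos, le_div_iff₀ hb]; linarith
  simp [max_eq_left this]

lemma tri_integral (b c : ℝ) (hb : 0 < b) (hc : 0 ≤ c) :
    (∫ f : ℝ, max 0 (c - |f| / b)) = c ^ 2 * b := by
  have hL : 0 ≤ c * b := mul_nonneg hc hb.le
  have heq : (fun f : ℝ => max 0 (c - |f| / b))
      = Set.indicator (Set.Icc (-(c*b)) (c*b)) (fun f => c - |f| / b) := by
    funext x
    by_cases hx : x ∈ Set.Icc (-(c*b)) (c*b)
    · rw [Set.indicator_of_mem hx]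
      have hxb : |x| ≤ c * b := abs_le.2 ⟨hx.1, hx.2⟩
      have : 0 ≤ c - |x| / b := by
        rw [sub_nonneg, div_le_iff₀ hb]; linarith
      exact max_eq_right this
    · rw [Set.indicator_of_notMem hx]
      have hxb : c * b < |x| := by
        simp only [Set.mem_Icc, not_and_or, not_le] at hx
        rcases hx with h | h
        · calc c * b < -x := by linarith
            _ ≤ |x| := neg_le_abs x
        · exact h.trans_le (le_abs_self x)
      have : c - |x| / b ≤ 0 := by
        rw [sub_nonpos, le_div_iff₀ hb]; linarith
      exact max_eq_left this
  rw [heq, MeasureTheory.integral_indicator measurableSet_Icc, integral_Icc_eq_integral_Ioc,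
    ← intervalIntegral.integral_of_le (by linarith)]
  have hsplit := intervalIntegral.integral_add_adjacent_intervals
    (a := -(c*b)) (b := 0) (c := c*b) (μ := volume)
    (f := fun x => c - |x| / b) ?_ ?_
  · rw [← hsplit]
    have h1 : (∫ x in (-(c*b))..0, (c - |x| / b)) = ∫ x in (-(c*b))..0, (c + x / b) := by
      apply intervalIntegral.integral_congr
      intro x hx
      rw [Set.uIcc_of_le (by linarith)] at hx
      show c - |x| / b = c + x / b
      rw [abs_of_nonpos hx.2]; ring
    have h2 : (∫ x in (0:ℝ)..(c*b), (c - |x| / b)) = ∫ x in (0:ℝ)..(c*b), (c - x / b) := by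
      apply intervalIntegral.integral_congr
      intro x hx
      rw [Set.uIcc_of_le (by linarith)] at hx
      show c - |x| / b = c - x / b
      rw [abs_of_nonneg hx.1]
    rw [h1, h2]
    have hint : ∀ A B : ℝ, IntervalIntegrable (fun x : ℝ => x / b) volume A B :=
      fun A B => Continuous.intervalIntegrable (by fun_prop) _ _
    have e1 : (∫ x in (-(c*b))..0, (c + x / b)) = c * (c*b) - (c*b)^2/(2*b) := by
      rw [intervalIntegral.integral_add intervalIntegrable_const (hint _ _)]
      simp [intervalIntegral.integral_div, integral_id]
      field_simp
      ring
    have e2 : (∫ x in (0:ℝ)..(c*b), (c - x / b)) = c * (c*b) - (c*b)^2/(2*b) := by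
      rw [intervalIntegral.integral_sub intervalIntegrable_const (hint _ _)]
      simp [intervalIntegral.integral_div, integral_id]
      field_simp
    rw [e1, e2]
    field_simp
    ring
  · exact ((continuous_const.sub ((continuous_abs).div_const b)).intervalIntegrable _ _)
  · exact ((continuous_const.sub ((continuous_abs).div_const b)).intervalIntegrable _ _)

lemma min_max_sub (y t : ℝ) (ht : 0 ≤ t) :
    min (max 0 y) t = max 0 y - max 0 (y - t) := by
  rcases le_total y 0 with h | h
  · rw [max_eq_left h, max_eq_left (by linarith)]
    simp [min_eq_left ht]
  · rw [max_eq_right h]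
    rcases le_total y t with h2 | h2
    · rw [max_eq_left (by linarith), min_eq_left h2]; ring
    · rw [max_eq_right (by linarith), min_eq_right h2]; ring

/-- Waterfilling distortion of the triangular PSD:
`∫ min(S_Λ, θ) = 1 - (1 - f_B θ)²` for `0 ≤ θ ≤ 1/f_B`, and consequently
`f_DR = 2 f_B (1 - f_B θ) = 2 f_B √(1 - D)`. -/
theorem triangular_psd_distortion
    (f_B : ℝ) (hfB : 0 < f_B) (S : ℝ → ℝ)
    (hS : ∀ f, S f = (1 / f_B) * max 0 (1 - |f| / f_B))
    (θ : ℝ) (hθ0 : 0 ≤ θ) (hθ1 : θ ≤ 1 / f_B) :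
    ((∫ f, min (S f) θ) = 1 - (1 - f_B * θ) ^ 2) ∧
    2 * f_B * (1 - f_B * θ) = 2 * f_B * Real.sqrt (1 - ∫ f, min (S f) θ) := by
  have ha : 0 ≤ 1 - f_B * θ := by
    have h1 : f_B * (1 / f_B) = 1 := by field_simp
    nlinarith [mul_le_mul_of_nonneg_left hθ1 hfB.le]
  have key : ∀ f, min (S f) θ
      = (1/f_B) * max 0 (1 - |f| / f_B) - (1/f_B) * max 0 ((1 - f_B*θ) - |f| / f_B) := by
    intro f
    rw [hS f]
    have hθ' : θ = (1/f_B) * (f_B * θ) := by field_simp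
    nth_rewrite 1 [hθ']
    rw [← mul_min_of_nonneg _ _ (by positivity : (0:ℝ) ≤ 1/f_B)]
    rw [min_max_sub _ _ (by positivity)]
    rw [mul_sub]
    congr 2
    congr 1
    ring
  have i1 : Integrable (fun f : ℝ => max 0 (1 - |f| / f_B)) := tri_integrable f_B 1 hfB
  have i2 : Integrable (fun f : ℝ => max 0 ((1 - f_B*θ) - |f| / f_B)) :=
    tri_integrable f_B (1 - f_B*θ) hfB
  have hD : (∫ f, min (S f) θ) = 1 - (1 - f_B * θ) ^ 2 := by
    have : (∫ f, min (S f) θ)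
        = ∫ f, ((1/f_B) * max 0 (1 - |f| / f_B) - (1/f_B) * max 0 ((1 - f_B*θ) - |f| / f_B)) := by
      exact integral_congr_ae (Filter.Eventually.of_forall key)
    rw [this, integral_sub (i1.const_mul _) (i2.const_mul _),
      MeasureTheory.integral_const_mul, MeasureTheory.integral_const_mul, tri_integral f_B 1 hfB zero_le_one,
      tri_integral f_B (1 - f_B*θ) hfB ha]
    field_simp
    try ring
  refine ⟨hD, ?_⟩
  rw [hD]
  have : (1:ℝ) - (1 - (1 - f_B * θ) ^ 2) = (1 - f_B * θ) ^ 2 := by ring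
  rw [this, Real.sqrt_sq ha]
end

section
/- (Rate–critical-frequency relation for the triangular PSD.) Fix f_B > 0 and let S_Λ(f) := (1/f_B)·max(0, 1 − |f|/f_B). For every θ with 0 < θ < 1/f_B, the waterfilling rate satisfies ½ ∫_ℝ log₂⁺(S_Λ(f)/θ) df = f_B · log₂(1/(f_B θ)) − f_B (1 − f_B θ)/ln 2. Equivalently, with f_DR := 2 f_B (1 − f_B θ) (the measure of {S_Λ > θ}), the rate R at which the critical sampling frequency equals f_DR is R = f_B · log₂(2 f_B / (2 f_B − f_DR)) − f_DR/(2 ln 2). -/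
/-!
With `c = f_B θ`, the ratio `S/θ` is the tent `max 0 (1 - |f|/f_B)` divided by `c`, and it exceeds
`1` exactly when `|f| < f_B (1 - c)`. Rescaling the frequency by `f_B` and folding by evenness,
the rate becomes `f_B ∫₀^{1-c} log((1 - t)/c) dt / log 2 = f_B ∫_c^1 log(u/c) du / log 2`,
an elementary integral equal to `f_B (c - 1 - log c) / log 2`.
-/

open MeasureTheory Real Set

noncomputable def tent (w x : ℝ) : ℝ := max 0 (1 - |x| / w)

theorem max_logb_zero_eq_posLog_div {b : ℝ} (hb : 1 < b) (x : ℝ) :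
    max (logb b x) 0 = log⁺ x / log b := by
  rw [posLog_apply, logb, max_comm, ← max_div_div_right (log_pos hb).le, zero_div]

theorem tent_eq_tent_one_div {w : ℝ} (hw : 0 < w) (x : ℝ) : tent w x = tent 1 (x / w) := by
  rw [tent, tent, div_one, abs_div, abs_of_pos hw]

theorem integral_posLog_tent_one_div {c : ℝ} (hc0 : 0 < c) (hc1 : c ≤ 1) :
    ∫ x, log⁺ (tent 1 x / c) = 2 * (c - 1 - log c) := by
  simp only [tent, div_one]
  have vanish : ∀ t ∈ Ioi 0 \ Ioc 0 (1 - c), log⁺ (max 0 (1 - t) / c) = 0 := by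
    rintro t ⟨ht0, ht⟩
    have : 1 - c < t := by
      simp only [mem_Ioc, not_and, not_le] at ht
      exact ht ht0
    rw [posLog_eq_zero_iff, abs_of_nonneg (by positivity), div_le_one hc0]
    exact max_le hc0.le (by linarith)
  have on_support : ∀ t ∈ uIcc 0 (1 - c),
      log⁺ (max 0 (1 - t) / c) = log (1 - t) - log c := by
    intro t ht
    rw [uIcc_of_le (by linarith)] at ht
    have hct : c ≤ 1 - t := by linarith [ht.2]
    rw [max_eq_right (by linarith), posLog_eq_log, log_div (by linarith) hc0.ne']
    rwa [abs_of_nonneg (div_nonneg (by linarith) hc0.le), one_le_div hc0]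
  have log_one_sub_integrable : IntervalIntegrable (fun t ↦ log (1 - t)) volume 0 (1 - c) := by
    simpa using (intervalIntegral.intervalIntegrable_log' (a := 1) (b := c)).comp_sub_left 1
  rw [integral_comp_abs (f := fun t ↦ log⁺ (max 0 (1 - t) / c)),
    setIntegral_eq_of_subset_of_forall_sdiff_eq_zero measurableSet_Ioi Ioc_subset_Ioi_self vanish,
    ← intervalIntegral.integral_of_le (by linarith), intervalIntegral.integral_congr on_support,
    intervalIntegral.integral_sub log_one_sub_integrable intervalIntegrable_const,
    intervalIntegral.integral_comp_sub_left (fun u ↦ log u), integral_log,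
    intervalIntegral.integral_const]
  simp only [sub_sub_cancel, sub_zero, log_one, smul_eq_mul]
  ring

theorem integral_posLog_tent_div {w c : ℝ} (hw : 0 < w) (hc0 : 0 < c) (hc1 : c ≤ 1) :
    ∫ x, log⁺ (tent w x / c) = 2 * w * (c - 1 - log c) := by
  simp only [tent_eq_tent_one_div hw]
  rw [Measure.integral_comp_div (fun t ↦ log⁺ (tent 1 t / c)), smul_eq_mul, abs_of_pos hw,
    integral_posLog_tent_one_div hc0 hc1]
  ring

/-- Rate–critical-frequency relation for the triangular PSD:
`½ ∫ log₂⁺(S_Λ/θ) = f_B log₂(1/(f_B θ)) - f_B (1 - f_B θ)/ln 2`, and equivalently,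
with `f_DR = 2 f_B (1 - f_B θ)`,
`R = f_B log₂(2 f_B/(2 f_B - f_DR)) - f_DR/(2 ln 2)`. -/
theorem triangular_psd_rate_critical_frequency
    (f_B : ℝ) (hfB : 0 < f_B) (S : ℝ → ℝ)
    (hS : ∀ f, S f = (1 / f_B) * max 0 (1 - |f| / f_B))
    (θ : ℝ) (hθ0 : 0 < θ) (hθ1 : θ < 1 / f_B) :
    ((1 / 2) * (∫ f, max (Real.logb 2 (S f / θ)) 0)
      = f_B * Real.logb 2 (1 / (f_B * θ)) - f_B * (1 - f_B * θ) / Real.log 2) ∧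
    ((1 / 2) * (∫ f, max (Real.logb 2 (S f / θ)) 0)
      = f_B * Real.logb 2 (2 * f_B / (2 * f_B - 2 * f_B * (1 - f_B * θ)))
        - 2 * f_B * (1 - f_B * θ) / (2 * Real.log 2)) := by
  have hc0 : 0 < f_B * θ := mul_pos hfB hθ0
  have hc1 : f_B * θ ≤ 1 := by
    have := (lt_div_iff₀' hfB).1 hθ1
    linarith
  have integrand (f : ℝ) :
      max (logb 2 (S f / θ)) 0 = log⁺ (tent f_B f / (f_B * θ)) / log 2 := by
    rw [max_logb_zero_eq_posLog_div one_lt_two, hS, tent]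
    congr 2
    field_simp
  have rate : (1 / 2) * (∫ f, max (logb 2 (S f / θ)) 0)
      = f_B * (f_B * θ - 1 - log (f_B * θ)) / log 2 := by
    simp only [integrand, integral_div, integral_posLog_tent_div hfB hc0 hc1]
    ring
  have logb_inv : logb 2 (1 / (f_B * θ)) = -log (f_B * θ) / log 2 := by
    rw [logb, one_div, log_inv]
  have critical_ratio : 2 * f_B / (2 * f_B - 2 * f_B * (1 - f_B * θ)) = 1 / (f_B * θ) := by
    field_simp
    ring
  refine ⟨?_, ?_⟩
  · rw [rate, logb_inv]
    field_simp
    ring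
  · rw [rate, critical_ratio, logb_inv]
    field_simp
    ring
end

section
/- (Rate–critical-frequency relation for the Gauss–Markov PSD.) Fix f₀ > 0, let S_Ω(f) := (1/f₀)/((π f/f₀)² + 1), fix f* > 0 and set θ := S_Ω(f*) (so that {f : S_Ω(f) > θ} = (−f*, f*) and f_DR := μ({S_Ω > θ}) = 2 f*). Then the waterfilling rate satisfies ½ ∫_ℝ log₂⁺(S_Ω(f)/θ) df = ∫_0^{f*} log₂( (1 + (π f*/f₀)²) / (1 + (π f/f₀)²) ) df = (1/ln 2)·( 2 f* − (2 f₀/π)·arctan(π f*/f₀) ) = (1/ln 2)·( f_DR − (2 f₀/π)·arctan(π f_DR/(2 f₀)) ). -/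
/-!
Writing `c = π / f₀`, the ratio `S f / S f*` is `(1 + (c f*)²) / (1 + (c f)²)`, which is `≥ 1`
exactly on `[-f*, f*]`. So the positive part of its logarithm is that logarithm cut off to
`[-f*, f*]`, and by evenness the rate is `∫₀^{f*}`. The closed form comes from the primitive
`x log(1 + x²) - 2x + 2 arctan x` of `log(1 + x²)`.
-/

open MeasureTheory Real Set intervalIntegral

theorem integral_max_zero_eq_two_mul_of_even {g : ℝ → ℝ} {F : ℝ} (hF : 0 ≤ F)
    (hg : IntervalIntegrable g volume (-F) F) (heven : ∀ x, g (-x) = g x)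
    (hpos : ∀ x, |x| ≤ F → 0 ≤ g x) (hneg : ∀ x, F < |x| → g x ≤ 0) :
    ∫ x, max (g x) 0 = 2 * ∫ x in 0..F, g x := by
  have hind : (fun x => max (g x) 0) = (Icc (-F) F).indicator g := by
    funext x
    by_cases hx : |x| ≤ F
    · rw [indicator_of_mem (show x ∈ Icc (-F) F from abs_le.1 hx), max_eq_left (hpos x hx)]
    · rw [indicator_of_notMem (show x ∉ Icc (-F) F from mt abs_le.2 hx),
        max_eq_right (hneg x (not_le.1 hx))]
  have hzero : (0 : ℝ) ∈ uIcc (-F) F := mem_uIcc_of_le (by linarith) hF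
  have hleft : ∫ x in -F..0, g x = ∫ x in 0..F, g x := by
    simpa [heven] using (integral_comp_neg (a := 0) (b := F) g).symm
  rw [hind, MeasureTheory.integral_indicator measurableSet_Icc, integral_Icc_eq_integral_Ioc,
    ← integral_of_le (by linarith),
    ← integral_add_adjacent_intervals (hg.mono_set (uIcc_subset_uIcc_left hzero))
      (hg.mono_set (uIcc_subset_uIcc_right hzero)), hleft, two_mul]

theorem hasDerivAt_primitive_log_one_add_sq (x : ℝ) :
    HasDerivAt (fun x => x * log (1 + x ^ 2) - 2 * x + 2 * arctan x) (log (1 + x ^ 2)) x := by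
  have hne : 1 + x ^ 2 ≠ 0 := by positivity
  have hlog : HasDerivAt (fun x => log (1 + x ^ 2)) (2 * x / (1 + x ^ 2)) x := by
    simpa using ((hasDerivAt_pow 2 x).const_add 1).log hne
  refine ((((hasDerivAt_id' x).mul hlog).sub ((hasDerivAt_id' x).const_mul 2)).add
    ((hasDerivAt_arctan x).const_mul 2)).congr_deriv ?_
  field_simp
  ring

theorem integral_log_one_add_sq (b : ℝ) :
    ∫ x in 0..b, log (1 + x ^ 2) = b * log (1 + b ^ 2) - 2 * b + 2 * arctan b := by
  rw [integral_eq_sub_of_hasDerivAt (fun x _ => hasDerivAt_primitive_log_one_add_sq x)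
    (by apply Continuous.intervalIntegrable; fun_prop (disch := intros; positivity))]
  simp

theorem integral_log_div_one_add_mul_sq {c : ℝ} (hc : c ≠ 0) (b : ℝ) :
    ∫ x in 0..b, log ((1 + (c * b) ^ 2) / (1 + (c * x) ^ 2))
      = 2 * b - 2 / c * arctan (c * b) := by
  have hcont : Continuous fun x : ℝ => log (1 + (c * x) ^ 2) := by
    fun_prop (disch := intros; positivity)
  rw [integral_congr (g := fun x => log (1 + (c * b) ^ 2) - log (1 + (c * x) ^ 2))
      (fun x _ => log_div (by positivity) (by positivity)),
    integral_sub intervalIntegrable_const (hcont.intervalIntegrable 0 b),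
    intervalIntegral.integral_const,
    integral_comp_mul_left (fun x => log (1 + x ^ 2)) hc, mul_zero, integral_log_one_add_sq,
    sub_zero, smul_eq_mul, smul_eq_mul]
  field_simp
  ring

theorem integral_max_logb_div_one_add_mul_sq (c : ℝ) {F : ℝ} (hF : 0 ≤ F) :
    ∫ x, max (logb 2 ((1 + (c * F) ^ 2) / (1 + (c * x) ^ 2))) 0
      = 2 * ∫ x in 0..F, logb 2 ((1 + (c * F) ^ 2) / (1 + (c * x) ^ 2)) := by
  refine integral_max_zero_eq_two_mul_of_even hF ?_ (fun x => by rw [mul_neg, neg_sq])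
    (fun x hxF => ?_) (fun x hFx => ?_)
  · apply Continuous.intervalIntegrable
    fun_prop (disch := intros; positivity)
  · refine logb_nonneg one_lt_two ((one_le_div (by positivity)).2 ?_)
    rw [mul_pow, mul_pow]
    gcongr 1 + c ^ 2 * ?_
    exact sq_le_sq' (abs_le.1 hxF).1 (abs_le.1 hxF).2
  · refine logb_nonpos one_lt_two (by positivity) ((div_le_one (by positivity)).2 ?_)
    rw [mul_pow, mul_pow]
    gcongr 1 + c ^ 2 * ?_
    exact sq_le_sq.2 (by rw [abs_of_nonneg hF]; exact hFx.le)

/-- Rate–critical-frequency relation for the Gauss–Markov PSD. With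
`θ = S_Ω(f*)` (so `f_DR = 2 f*`), the waterfilling rate equals
`∫_0^{f*} log₂((1+(π f*/f₀)²)/(1+(π f/f₀)²)) df
  = (1/ln 2)(2 f* - (2 f₀/π) arctan(π f*/f₀))
  = (1/ln 2)(f_DR - (2 f₀/π) arctan(π f_DR/(2 f₀)))`. -/
theorem gauss_markov_psd_rate_critical_frequency
    (f₀ : ℝ) (hf₀ : 0 < f₀) (S : ℝ → ℝ)
    (hS : ∀ f, S f = (1 / f₀) / ((Real.pi * f / f₀) ^ 2 + 1))
    (fstar : ℝ) (hfstar : 0 < fstar) (θ : ℝ) (hθ : θ = S fstar) :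
    ((1 / 2) * (∫ f, max (Real.logb 2 (S f / θ)) 0)
      = ∫ f in (0 : ℝ)..fstar,
          Real.logb 2 ((1 + (Real.pi * fstar / f₀) ^ 2) / (1 + (Real.pi * f / f₀) ^ 2))) ∧
    ((1 / 2) * (∫ f, max (Real.logb 2 (S f / θ)) 0)
      = (1 / Real.log 2)
        * (2 * fstar - (2 * f₀ / Real.pi) * Real.arctan (Real.pi * fstar / f₀))) ∧
    ((1 / 2) * (∫ f, max (Real.logb 2 (S f / θ)) 0)
      = (1 / Real.log 2)
        * ((2 * fstar)
            - (2 * f₀ / Real.pi) * Real.arctan (Real.pi * (2 * fstar) / (2 * f₀)))) := by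
  have hc : π / f₀ ≠ 0 := by positivity
  have hratio : ∀ f, S f / θ = (1 + (π / f₀ * fstar) ^ 2) / (1 + (π / f₀ * f) ^ 2) := by
    intro f
    rw [hθ, hS, hS]
    field_simp
    ring
  have hrate : (1 / 2) * ∫ f, max (logb 2 (S f / θ)) 0
      = ∫ f in 0..fstar, logb 2 ((1 + (π / f₀ * fstar) ^ 2) / (1 + (π / f₀ * f) ^ 2)) := by
    simp_rw [hratio, integral_max_logb_div_one_add_mul_sq _ hfstar.le]
    ring
  have hclosed :
      ∫ f in 0..fstar, logb 2 ((1 + (π / f₀ * fstar) ^ 2) / (1 + (π / f₀ * f) ^ 2))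
      = 1 / log 2 * (2 * fstar - 2 * f₀ / π * arctan (π / f₀ * fstar)) := by
    simp_rw [logb, intervalIntegral.integral_div, integral_log_div_one_add_mul_sq hc]
    field_simp
  rw [show π * (2 * fstar) / (2 * f₀) = π * fstar / f₀ by field_simp]
  simp only [mul_div_right_comm π]
  exact ⟨hrate, hrate.trans hclosed, hrate.trans hclosed⟩
end

section
/- (Proposition: sub-Nyquist sampling is optimal for PCM of bandlimited signals.) Fix f_B > 0, R > 0 with R ≥ 2 f_B, c₀ > 0, and a measurable, nonnegative, integrable S : ℝ → ℝ with S(f) = 0 for all |f| > f_B. Define, for 0 < f_s ≤ R, the PCM distortion D̃(f_s, R) := ( ∫_ℝ S(f) df − ∫_{−f_s/2}^{f_s/2} S(f) df ) + ∫_{−f_s/2}^{f_s/2} S(f) / ( 1 + f_s·(2^{R/f_s} − 1)²·S(f)/c₀ ) df. Then for every f_s with 2 f_B ≤ f_s ≤ R one has D̃(2 f_B, R) ≤ D̃(f_s, R); i.e., the sampling frequency minimizing the PCM distortion at fixed bitrate R is not larger than the Nyquist rate 2 f_B. -/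
open MeasureTheory

private lemma key_rpow (x y : ℝ) (hy : 0 < y) (hxy : y ≤ x) :
    x * ((2:ℝ) ^ y - 1) ^ 2 ≤ y * ((2:ℝ) ^ x - 1) ^ 2 := by
  have hx : 0 < x := lt_of_lt_of_le hy hxy
  set a : ℝ := y / x with ha
  have ha0 : 0 ≤ a := by positivity
  have ha1 : a ≤ 1 := by
    rw [ha, div_le_one hx]; exact hxy
  -- convexity of exp at points (log 2 * x) and 0
  have hconv := convexOn_exp.2 (Set.mem_univ (Real.log 2 * x)) (Set.mem_univ (0:ℝ))
      ha0 (by linarith : (0:ℝ) ≤ 1 - a) (by ring)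
  simp only [smul_eq_mul, mul_zero, add_zero, Real.exp_zero] at hconv
  have h2x : (2:ℝ) ^ x = Real.exp (Real.log 2 * x) := by
    rw [Real.rpow_def_of_pos (by norm_num : (0:ℝ) < 2)]
  have h2y : (2:ℝ) ^ y = Real.exp (Real.log 2 * (a * x)) := by
    rw [Real.rpow_def_of_pos (by norm_num : (0:ℝ) < 2)]
    congr 1
    rw [ha]; field_simp
  have hslope : (2:ℝ) ^ y - 1 ≤ a * ((2:ℝ) ^ x - 1) := by
    rw [h2x, h2y]
    have : Real.log 2 * (a * x) = a * (Real.log 2 * x) := by ring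
    rw [this]
    nlinarith [hconv]
  have hu0 : (0:ℝ) ≤ (2:ℝ) ^ y - 1 := by
    have : (2:ℝ) ^ (0:ℝ) ≤ (2:ℝ) ^ y :=
      Real.rpow_le_rpow_of_exponent_le (by norm_num) hy.le
    simpa [Real.rpow_zero] using this
  have hv0 : (0:ℝ) ≤ (2:ℝ) ^ x - 1 := by
    have : (2:ℝ) ^ (0:ℝ) ≤ (2:ℝ) ^ x :=
      Real.rpow_le_rpow_of_exponent_le (by norm_num) hx.le
    simpa [Real.rpow_zero] using this
  -- from the slope inequality: x * u ≤ y * v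
  have hmain : x * ((2:ℝ) ^ y - 1) ≤ y * ((2:ℝ) ^ x - 1) := by
    have := mul_le_mul_of_nonneg_left hslope hx.le
    have hax : x * (a * ((2:ℝ)^x - 1)) = y * ((2:ℝ)^x - 1) := by
      rw [ha]; field_simp
    linarith [this, hax.le, hax.ge]
  have huv : (2:ℝ) ^ y - 1 ≤ (2:ℝ) ^ x - 1 := by
    have : (2:ℝ) ^ y ≤ (2:ℝ) ^ x :=
      Real.rpow_le_rpow_of_exponent_le (by norm_num) hxy
    linarith
  nlinarith [mul_le_mul_of_nonneg_right hmain hu0,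
    mul_le_mul_of_nonneg_left huv (mul_nonneg hy.le hv0)]

private lemma snr_coef_mono (R f_B fs : ℝ) (hfB : 0 < f_B) (h1 : 2 * f_B ≤ fs)
    (h2 : fs ≤ R) :
    fs * ((2:ℝ) ^ (R / fs) - 1) ^ 2 ≤ (2 * f_B) * ((2:ℝ) ^ (R / (2 * f_B)) - 1) ^ 2 := by
  have hfs : 0 < fs := lt_of_lt_of_le (by linarith) h1
  have hR0 : 0 < R := lt_of_lt_of_le hfs h2
  have hB2 : 0 < 2 * f_B := by linarith
  have hy : 0 < R / fs := by positivity
  have hxy : R / fs ≤ R / (2 * f_B) := div_le_div_of_nonneg_left hR0.le hB2 h1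
  have key := key_rpow (R / (2 * f_B)) (R / fs) hy hxy
  have hmul := mul_le_mul_of_nonneg_left key
      (by positivity : (0:ℝ) ≤ (2 * f_B) * fs / R)
  calc fs * ((2:ℝ) ^ (R / fs) - 1) ^ 2
      = (2 * f_B) * fs / R * (R / (2 * f_B) * ((2:ℝ) ^ (R / fs) - 1) ^ 2) := by
        field_simp
    _ ≤ (2 * f_B) * fs / R * (R / fs * ((2:ℝ) ^ (R / (2 * f_B)) - 1) ^ 2) := hmul
    _ = (2 * f_B) * ((2:ℝ) ^ (R / (2 * f_B)) - 1) ^ 2 := by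
        field_simp

/-- Sub-Nyquist sampling is optimal for PCM of bandlimited signals:
for a signal bandlimited to `[-f_B, f_B]` and a fixed bitrate `R ≥ 2 f_B`, the PCM
distortion at the Nyquist rate `2 f_B` is at most the PCM distortion at any
sampling frequency `f_s` with `2 f_B ≤ f_s ≤ R`. -/
theorem pcm_subNyquist_optimal
    (f_B R c₀ : ℝ) (hfB : 0 < f_B) (hR : 2 * f_B ≤ R) (hc₀ : 0 < c₀)
    (S : ℝ → ℝ) (hSmeas : Measurable S) (hSnonneg : ∀ f, 0 ≤ S f)
    (hSint : Integrable S) (hband : ∀ f : ℝ, f_B < |f| → S f = 0)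
    (Dt : ℝ → ℝ)
    (hDt : ∀ fs : ℝ, Dt fs =
      ((∫ f, S f) - (∫ f in Set.Icc (-(fs / 2)) (fs / 2), S f))
      + ∫ f in Set.Icc (-(fs / 2)) (fs / 2),
          S f / (1 + fs * ((2 : ℝ) ^ (R / fs) - 1) ^ 2 * S f / c₀)) :
    ∀ fs : ℝ, 2 * f_B ≤ fs → fs ≤ R → Dt (2 * f_B) ≤ Dt fs := by
  -- vanishing off the band
  have hvanish : ∀ c : ℝ, f_B ≤ c → ∀ f : ℝ, f ∉ Set.Icc (-c) c → S f = 0 := by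
    intro c hc f hf
    apply hband
    simp only [Set.mem_Icc, not_and_or, not_le] at hf
    rcases hf with h | h
    · calc f_B ≤ c := hc
        _ < |f| := by rw [abs_of_nonpos (by linarith)]; linarith
    · calc f_B ≤ c := hc
        _ < |f| := lt_of_lt_of_le h (le_abs_self f)
  -- denominators
  have hden : ∀ s : ℝ, 0 ≤ s → ∀ f : ℝ, (1:ℝ) ≤ 1 + s * S f / c₀ := by
    intro s hs f
    have : 0 ≤ s * S f / c₀ := div_nonneg (mul_nonneg hs (hSnonneg f)) hc₀.le
    linarith
  -- integrability of the quotient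
  have hint : ∀ s : ℝ, 0 ≤ s →
      Integrable (fun f => S f / (1 + s * S f / c₀)) := by
    intro s hs
    have hmeas : Measurable (fun f => S f / (1 + s * S f / c₀)) :=
      hSmeas.div (measurable_const.add ((hSmeas.const_mul s).div_const c₀))
    refine hSint.mono hmeas.aestronglyMeasurable (Filter.Eventually.of_forall fun f => ?_)
    have hd := hden s hs f
    have hq0 : 0 ≤ S f / (1 + s * S f / c₀) := by
      apply div_nonneg (hSnonneg f); linarith
    rw [Real.norm_eq_abs, Real.norm_eq_abs, abs_of_nonneg hq0, abs_of_nonneg (hSnonneg f)]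
    calc S f / (1 + s * S f / c₀) ≤ S f / 1 :=
          div_le_div_of_nonneg_left (hSnonneg f) one_pos hd
      _ = S f := div_one _
  -- set integrals equal to full integrals
  have hsetS : ∀ c : ℝ, f_B ≤ c → (∫ f in Set.Icc (-c) c, S f) = ∫ f, S f := by
    intro c hc
    exact setIntegral_eq_integral_of_forall_compl_eq_zero (hvanish c hc)
  have hsetQ : ∀ c s : ℝ, f_B ≤ c →
      (∫ f in Set.Icc (-c) c, S f / (1 + s * S f / c₀))
        = ∫ f, S f / (1 + s * S f / c₀) := by
    intro c s hc
    refine setIntegral_eq_integral_of_forall_compl_eq_zero fun f hf => ?_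
    rw [hvanish c hc f hf]
    simp
  intro fs h1 h2
  have hfs : 0 < fs := lt_of_lt_of_le (by linarith) h1
  have hcN : f_B ≤ 2 * f_B / 2 := by linarith
  have hcS : f_B ≤ fs / 2 := by linarith
  have haN0 : 0 ≤ (2 * f_B) * ((2:ℝ) ^ (R / (2 * f_B)) - 1) ^ 2 :=
    mul_nonneg (by linarith) (sq_nonneg _)
  have haS0 : 0 ≤ fs * ((2:ℝ) ^ (R / fs) - 1) ^ 2 :=
    mul_nonneg hfs.le (sq_nonneg _)
  have hcomp := snr_coef_mono R f_B fs hfB h1 h2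
  rw [hDt (2 * f_B), hDt fs, hsetS _ hcN, hsetS _ hcS, hsetQ _ _ hcN, hsetQ _ _ hcS]
  simp only [sub_self, zero_add]
  refine integral_mono (hint _ haN0) (hint _ haS0) fun f => ?_
  apply div_le_div_of_nonneg_left (hSnonneg f) (by nlinarith [hden _ haS0 f])
  have hmul : fs * ((2:ℝ) ^ (R / fs) - 1) ^ 2 * S f
      ≤ (2 * f_B) * ((2:ℝ) ^ (R / (2 * f_B)) - 1) ^ 2 * S f :=
    mul_le_mul_of_nonneg_right hcomp (hSnonneg f)
  have hfrac := div_le_div_of_nonneg_right hmul hc₀.le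
  linarith
end
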